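/- arXiv:math/0702157 — 7 statements merged into one kernel-verified Lean document; each statement's English description precedes it below -/
import Mathlib

section
/- Let {Q_u} and {P_u} be two monic polynomial families in non-commuting variables x₁,…,x_d, both indexed by multi-indices (words in {1,…,d}), and suppose {Q_u} is orthogonal with respect to a state φ. Then the following are equivalent: (1) ⟨P_u,P_v⟩ = 0 whenever |u| ≠ |v| (pseudo-orthogonality); (2) for each u, ‖Q_u − P_u‖ = 0 in the seminorm induced by φ. Moreover, if either holds, then {P_u} is itself orthogonal: ⟨P_u,P_v⟩ = 0 for all u ≠ v. -/
noncomputable section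
open scoped Classical

abbrev NCPoly (d : ℕ) := FreeAlgebra ℝ (Fin d)

/-- The monomial x_u = x_{u(1)} ⋯ x_{u(k)}. -/
def Xmon {d : ℕ} (u : List (Fin d)) : NCPoly d := (u.map (FreeAlgebra.ι ℝ)).prod

/-- A state on ℝ⟨x₁,…,x_d⟩. -/
structure IsState {d : ℕ} (φ : NCPoly d →ₗ[ℝ] ℝ) : Prop where
  unital : φ 1 = 1
  star_comp : ∀ p : NCPoly d, φ (star p) = φ p
  pos : ∀ p : NCPoly d, 0 ≤ φ (star p * p)

def ipS {d : ℕ} (φ : NCPoly d →ₗ[ℝ] ℝ) (p q : NCPoly d) : ℝ := φ (star p * q)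

def nrmS {d : ℕ} (φ : NCPoly d →ₗ[ℝ] ℝ) (p : NCPoly d) : ℝ := Real.sqrt (ipS φ p p)

def IsMonicFamily {d : ℕ} (P : List (Fin d) → NCPoly d) : Prop :=
  ∀ u, P u - Xmon u ∈
    Submodule.span ℝ {q : NCPoly d | ∃ v : List (Fin d), v.length < u.length ∧ q = Xmon v}

def IsMOPS {d : ℕ} (φ : NCPoly d →ₗ[ℝ] ℝ) (P : List (Fin d) → NCPoly d) : Prop :=
  IsMonicFamily P ∧ ∀ u v, u ≠ v → ipS φ (P u) (P v) = 0

def wordsLen (d : ℕ) : ℕ → Finset (List (Fin d))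
  | 0 => {[]}
  | k + 1 => ((Finset.univ : Finset (Fin d)) ×ˢ wordsLen d k).image fun p => p.1 :: p.2

def lowWords (d n : ℕ) : Finset (List (Fin d)) := (Finset.range n).biUnion (wordsLen d)

/-- Gram-Schmidt recursion. -/
def IsGS {d : ℕ} (φ : NCPoly d →ₗ[ℝ] ℝ) (P : List (Fin d) → NCPoly d) : Prop :=
  ∀ u, P u = Xmon u - ∑ v ∈ (lowWords d u.length).filter (fun v => nrmS φ (P v) ≠ 0),
      (ipS φ (Xmon u) (P v) / (nrmS φ (P v)) ^ 2) • P v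

section lems
variable {d : ℕ} (φ : NCPoly d →ₗ[ℝ] ℝ)

lemma ip_symm (hφ : IsState φ) (p q : NCPoly d) : ipS φ p q = ipS φ q p := by
  unfold ipS
  rw [← hφ.star_comp (star q * p)]
  simp [star_mul]

lemma star_smul' (c : ℝ) (p : NCPoly d) : star (c • p) = c • star p := by
  rw [Algebra.smul_def, star_mul, FreeAlgebra.star_algebraMap, ← Algebra.commutes,
    ← Algebra.smul_def]

lemma ip_add_right (p q r : NCPoly d) : ipS φ p (q + r) = ipS φ p q + ipS φ p r := by
  simp [ipS, mul_add]

lemma ip_sub_left (p q r : NCPoly d) : ipS φ (p - q) r = ipS φ p r - ipS φ q r := by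
  simp [ipS, sub_mul, star_sub]

lemma ip_sub_right (p q r : NCPoly d) : ipS φ p (q - r) = ipS φ p q - ipS φ p r := by
  simp [ipS, mul_sub]

lemma ip_smul_right (c : ℝ) (p q : NCPoly d) : ipS φ p (c • q) = c * ipS φ p q := by
  simp [ipS, mul_smul_comm]

lemma ip_add_left (p q r : NCPoly d) : ipS φ (p + q) r = ipS φ p r + ipS φ q r := by
  simp [ipS, add_mul]

lemma ip_smul_left (c : ℝ) (p q : NCPoly d) : ipS φ (c • p) q = c * ipS φ p q := by
  simp [ipS, star_smul', smul_mul_assoc]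

lemma ip_nonneg (hφ : IsState φ) (p : NCPoly d) : 0 ≤ ipS φ p p := hφ.pos p

lemma ip_self_zero (hφ : IsState φ) (p q : NCPoly d) (h : ipS φ p p = 0) :
    ipS φ p q = 0 := by
  by_contra hc
  set c := ipS φ p q with hcdef
  set b := ipS φ q q with hbdef
  have hb : 0 ≤ b := hφ.pos q
  set t : ℝ := -(b + 1) / (2 * c) with ht
  have hpos : 0 ≤ ipS φ (t • p + q) (t • p + q) := hφ.pos (t • p + q)
  have hexp : ipS φ (t • p + q) (t • p + q) = t * t * ipS φ p p + 2 * t * c + b := by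
    rw [ip_add_left, ip_smul_left, ip_add_right, ip_smul_right, ip_add_right, ip_smul_right,
      ip_symm φ hφ q p]
    ring
  have h2 : 2 * t * c = -(b + 1) := by
    rw [ht]
    field_simp
  rw [hexp, h, h2] at hpos
  linarith

lemma ip_span_zero (S : Set (NCPoly d)) (p : NCPoly d) (h : ∀ s ∈ S, ipS φ p s = 0) :
    ∀ r ∈ Submodule.span ℝ S, ipS φ p r = 0 := by
  intro r hr
  induction hr using Submodule.span_induction with
  | mem s hs => exact h s hs
  | zero => simp [ipS]
  | add a b _ _ ha hb => rw [ip_add_right, ha, hb, add_zero]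
  | smul c a _ ha => rw [ip_smul_right, ha, mul_zero]

lemma mono_span (Q : List (Fin d) → NCPoly d) (hQ : IsMonicFamily Q) (n : ℕ) :
    Submodule.span ℝ {q : NCPoly d | ∃ v : List (Fin d), v.length < n ∧ q = Xmon v}
      ≤ Submodule.span ℝ {q : NCPoly d | ∃ v : List (Fin d), v.length < n ∧ q = Q v} := by
  induction n using Nat.strong_induction_on with
  | _ n ih =>
    rw [Submodule.span_le]
    rintro _ ⟨v, hv, rfl⟩
    have h1 : Q v ∈ Submodule.span ℝ {q : NCPoly d | ∃ w : List (Fin d), w.length < n ∧ q = Q w} :=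
      Submodule.subset_span ⟨v, hv, rfl⟩
    have h2 : Q v - Xmon v ∈
        Submodule.span ℝ {q : NCPoly d | ∃ w : List (Fin d), w.length < n ∧ q = Q w} := by
      have h3 := ih v.length hv (hQ v)
      refine Submodule.span_mono ?_ h3
      rintro _ ⟨w, hw, rfl⟩; exact ⟨w, hw.trans hv, rfl⟩
    rw [show Xmon v = Q v - (Q v - Xmon v) from (sub_sub_cancel _ _).symm]; exact Submodule.sub_mem _ h1 h2

end lems

/-- for a monic family P and a monic orthogonal family Q,
pseudo-orthogonality of P is equivalent to P = Q in L²(φ); either implies P orthogonal. -/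
theorem pseudo_orthogonal_iff_L2_equal {d : ℕ} (φ : NCPoly d →ₗ[ℝ] ℝ) (hφ : IsState φ)
    (P Q : List (Fin d) → NCPoly d) (hP : IsMonicFamily P) (hQ : IsMonicFamily Q)
    (hQorth : ∀ u v, u ≠ v → ipS φ (Q u) (Q v) = 0) :
    ((∀ u v : List (Fin d), u.length ≠ v.length → ipS φ (P u) (P v) = 0) ↔
      (∀ u, nrmS φ (Q u - P u) = 0)) ∧
    ((∀ u v : List (Fin d), u.length ≠ v.length → ipS φ (P u) (P v) = 0) →
      ∀ u v : List (Fin d), u ≠ v → ipS φ (P u) (P v) = 0) := by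

  have fwd : (∀ u v : List (Fin d), u.length ≠ v.length → ipS φ (P u) (P v) = 0) →
      ∀ u, ipS φ (Q u - P u) (Q u - P u) = 0 := by
    intro hps u
    have hr : Q u - P u ∈ Submodule.span ℝ
        {q : NCPoly d | ∃ v : List (Fin d), v.length < u.length ∧ q = Xmon v} := by
      have h := Submodule.sub_mem _ (hQ u) (hP u)
      simpa using h
    have hrQ := mono_span Q hQ u.length hr
    have hrP := mono_span P hP u.length hr
    have hQr : ipS φ (Q u) (Q u - P u) = 0 := by
      refine ip_span_zero φ _ _ ?_ _ hrQ
      rintro _ ⟨v, hv, rfl⟩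
      exact hQorth u v (by rintro rfl; exact absurd hv (lt_irrefl _))
    have hPr : ipS φ (P u) (Q u - P u) = 0 := by
      refine ip_span_zero φ _ _ ?_ _ hrP
      rintro _ ⟨v, hv, rfl⟩
      exact hps u v hv.ne'
    rw [ip_sub_left, hQr, hPr, sub_zero]
  have L2imp : (∀ w, ipS φ (Q w - P w) (Q w - P w) = 0) →
      ∀ u v : List (Fin d), u ≠ v → ipS φ (P u) (P v) = 0 := by
    intro hz u v huv
    have h1 : ipS φ (Q u - P u) (P v) = 0 := ip_self_zero φ hφ _ _ (hz u)
    have h2 : ipS φ (Q v - P v) (Q u) = 0 := ip_self_zero φ hφ _ _ (hz v)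
    have h2' : ipS φ (Q u) (Q v - P v) = 0 := by rw [ip_symm φ hφ]; exact h2
    have e1 : ipS φ (P u) (P v) = ipS φ (Q u) (P v) - ipS φ (Q u - P u) (P v) := by
      rw [ip_sub_left]; ring
    have e2 : ipS φ (Q u) (P v) = ipS φ (Q u) (Q v) - ipS φ (Q u) (Q v - P v) := by
      rw [ip_sub_right]; ring
    rw [e1, e2, h1, h2', hQorth u v huv]; ring
  refine ⟨⟨fun hps u => by rw [nrmS, fwd hps u, Real.sqrt_zero], fun hL2 u v huv => ?_⟩,
    fun hps u v huv => L2imp (fwd hps) u v huv⟩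
  have hz : ∀ w, ipS φ (Q w - P w) (Q w - P w) = 0 := fun w =>
    le_antisymm (Real.sqrt_eq_zero'.mp (hL2 w)) (hφ.pos _)
  exact L2imp hz u v (fun h => huv (congrArg List.length h))
end
end

section
/- Let φ be a state on R⟨x₁,…,x_d⟩ that has a monic orthogonal polynomial system {P_v}. If ‖P_u‖ = 0 for some multi-index u, then ‖P_{(i,u)}‖ = 0 for every i ∈ {1,…,d}, where (i,u) denotes the word u with letter i prepended. -/
noncomputable section
open scoped Classical

/-! ### Auxiliary lemmas -/

lemma star_smul_nc {d : ℕ} (b : NCPoly d) (c : ℝ) : star (c • b) = c • star b := by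
  rw [Algebra.smul_def, Algebra.smul_def, star_mul, FreeAlgebra.star_algebraMap,
    Algebra.commutes]

lemma ipS_symm {d : ℕ} (φ : NCPoly d →ₗ[ℝ] ℝ) (hφ : IsState φ) (p q : NCPoly d) :
    ipS φ p q = ipS φ q p := by
  unfold ipS
  rw [← hφ.star_comp (star q * p), star_mul, star_star]

lemma ipS_expand {d : ℕ} (φ : NCPoly d →ₗ[ℝ] ℝ) (hφ : IsState φ) (a b : NCPoly d) (c : ℝ) :
    ipS φ (a + c • b) (a + c • b)
      = ipS φ a a + 2 * c * ipS φ a b + c^2 * ipS φ b b := by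
  have h := ipS_symm φ hφ b a
  unfold ipS at h ⊢
  simp only [star_add, star_smul_nc, add_mul, mul_add, smul_mul_assoc, mul_smul_comm,
    smul_smul, map_add, map_smul, smul_eq_mul]
  rw [h]; ring

/-- Cauchy–Schwarz degenerate case. -/
lemma ipS_eq_zero_of_self {d : ℕ} (φ : NCPoly d →ₗ[ℝ] ℝ) (hφ : IsState φ)
    {p : NCPoly d} (hp : ipS φ p p = 0) (q : NCPoly d) : ipS φ q p = 0 := by
  by_contra h
  set B := ipS φ q q with hB
  set t := -(B + 1) / (2 * ipS φ q p) with ht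
  have key : 0 ≤ ipS φ (q + t • p) (q + t • p) := hφ.pos _
  rw [ipS_expand φ hφ, hp] at key
  have hq : 2 * t * ipS φ q p = -(B + 1) := by
    rw [ht]; field_simp
  rw [hq] at key
  have hBpos : 0 ≤ B := hφ.pos q
  linarith

lemma nrmS_zero_iff {d : ℕ} (φ : NCPoly d →ₗ[ℝ] ℝ) (hφ : IsState φ) (p : NCPoly d) :
    nrmS φ p = 0 ↔ ipS φ p p = 0 := by
  unfold nrmS
  rw [Real.sqrt_eq_zero']
  constructor
  · intro h; exact le_antisymm h (hφ.pos p)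
  · intro h; exact le_of_eq h

lemma Xmon_cons {d : ℕ} (i : Fin d) (v : List (Fin d)) :
    Xmon (i :: v) = FreeAlgebra.ι ℝ i * Xmon v := by
  simp [Xmon]

/-- Every monomial lies in the span of the MOPS elements of no greater length. -/
lemma Xmon_mem_span {d : ℕ} {P : List (Fin d) → NCPoly d} (hmf : IsMonicFamily P) :
    ∀ n (v : List (Fin d)), v.length ≤ n →
      Xmon v ∈ Submodule.span ℝ {q : NCPoly d | ∃ w : List (Fin d), w.length ≤ v.length ∧ q = P w} := by
  intro n
  induction n with
  | zero =>
    intro v hv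
    have h := hmf v
    have hlt : {q : NCPoly d | ∃ w : List (Fin d), w.length < v.length ∧ q = Xmon w} = ∅ := by
      ext q; simp only [Set.mem_setOf_eq, Set.mem_empty_iff_false, iff_false, not_exists]
      intro w hw
      omega
    rw [hlt] at h
    simp only [Submodule.span_empty, Submodule.mem_bot] at h
    have : Xmon v = P v - (P v - Xmon v) := by abel
    rw [this, h, sub_zero]
    exact Submodule.subset_span ⟨v, le_refl _, rfl⟩
  | succ n ih =>
    intro v hv
    have h := hmf v
    have hspan : Submodule.span ℝ {q : NCPoly d | ∃ w : List (Fin d), w.length < v.length ∧ q = Xmon w}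
        ≤ Submodule.span ℝ {q : NCPoly d | ∃ w : List (Fin d), w.length ≤ v.length ∧ q = P w} := by
      rw [Submodule.span_le]
      rintro q ⟨w, hw, rfl⟩
      have := ih w (by omega)
      refine Submodule.span_mono ?_ this
      rintro r ⟨w', hw', rfl⟩
      exact ⟨w', by omega, rfl⟩
    have h2 : P v - Xmon v ∈
        Submodule.span ℝ {q : NCPoly d | ∃ w : List (Fin d), w.length ≤ v.length ∧ q = P w} :=
      hspan h
    have h3 : P v ∈
        Submodule.span ℝ {q : NCPoly d | ∃ w : List (Fin d), w.length ≤ v.length ∧ q = P w} :=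
      Submodule.subset_span ⟨v, le_refl _, rfl⟩
    have : Xmon v = P v - (P v - Xmon v) := by abel
    rw [this]
    exact Submodule.sub_mem _ h3 h2

/-- if a MOPS element P_u has zero seminorm, so does P_{(i,u)}. -/
theorem mops_null_ideal {d : ℕ} (φ : NCPoly d →ₗ[ℝ] ℝ) (hφ : IsState φ)
    (P : List (Fin d) → NCPoly d) (hP : IsMOPS φ P)
    (u : List (Fin d)) (hu : nrmS φ (P u) = 0) :
    ∀ i : Fin d, nrmS φ (P (i :: u)) = 0 := by
  intro i
  obtain ⟨hmf, horth⟩ := hP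
  rw [nrmS_zero_iff φ hφ] at hu ⊢
  set p := P (i :: u) with hp
  -- the linear functional q ↦ ipS φ p q
  set L : NCPoly d →ₗ[ℝ] ℝ := φ ∘ₗ LinearMap.mulLeft ℝ (star p) with hL
  have hLdef : ∀ q, L q = ipS φ p q := fun q => rfl
  -- L vanishes on the span of P_w for short w
  have hker : Submodule.span ℝ {q : NCPoly d | ∃ w : List (Fin d), w.length ≤ u.length ∧ q = P w}
      ≤ LinearMap.ker L := by
    rw [Submodule.span_le]
    rintro q ⟨w, hw, rfl⟩
    simp only [SetLike.mem_coe, LinearMap.mem_ker]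
    rw [hLdef]
    exact horth _ _ (by intro h; rw [← h] at hw; simp at hw)
  -- P_u has null inner products
  have hPu : ∀ q, ipS φ q (P u) = 0 := ipS_eq_zero_of_self φ hφ hu
  -- x_i * P u is null
  have hxPu : ipS φ (FreeAlgebra.ι ℝ i * P u) (FreeAlgebra.ι ℝ i * P u) = 0 := by
    have : ipS φ (FreeAlgebra.ι ℝ i * P u) (FreeAlgebra.ι ℝ i * P u)
        = ipS φ (P u) (FreeAlgebra.ι ℝ i * (FreeAlgebra.ι ℝ i * P u)) := by
      unfold ipS
      rw [star_mul, FreeAlgebra.star_ι, mul_assoc]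
    rw [this, ipS_symm φ hφ]
    exact hPu _
  have hpxPu : ipS φ p (FreeAlgebra.ι ℝ i * P u) = 0 :=
    ipS_eq_zero_of_self φ hφ hxPu p
  -- split p = Xmon (i::u) + (p - Xmon (i::u))
  have hLerr : L (p - Xmon (i :: u)) = 0 := by
    have hmem := hmf (i :: u)
    have hle : Submodule.span ℝ {q : NCPoly d | ∃ v : List (Fin d), v.length < (i :: u).length ∧ q = Xmon v}
        ≤ LinearMap.ker L := by
      refine le_trans ?_ hker
      rw [Submodule.span_le]
      rintro q ⟨v, hv, rfl⟩
      simp only [List.length_cons] at hv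
      have := Xmon_mem_span hmf v.length v (le_refl _)
      refine Submodule.span_mono ?_ this
      rintro r ⟨w, hw, rfl⟩
      exact ⟨w, by omega, rfl⟩
    exact hle hmem
  -- L on Xmon (i::u)
  have hLX : L (Xmon (i :: u)) = 0 := by
    rw [Xmon_cons]
    -- write Xmon u = P u + (Xmon u - P u)
    have hsplit : FreeAlgebra.ι ℝ i * Xmon u
        = FreeAlgebra.ι ℝ i * P u + FreeAlgebra.ι ℝ i * (Xmon u - P u) := by
      rw [mul_sub]; abel
    rw [hsplit, map_add]
    have h1 : L (FreeAlgebra.ι ℝ i * P u) = 0 := hpxPu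
    -- second part
    set M : NCPoly d →ₗ[ℝ] ℝ := L ∘ₗ LinearMap.mulLeft ℝ (FreeAlgebra.ι ℝ i) with hM
    have hMdef : ∀ q, M q = L (FreeAlgebra.ι ℝ i * q) := fun q => rfl
    have herr : Xmon u - P u ∈
        Submodule.span ℝ {q : NCPoly d | ∃ v : List (Fin d), v.length < u.length ∧ q = Xmon v} := by
      have := hmf u
      have := Submodule.neg_mem _ this
      rwa [neg_sub] at this
    have hMker : Submodule.span ℝ {q : NCPoly d | ∃ v : List (Fin d), v.length < u.length ∧ q = Xmon v}
        ≤ LinearMap.ker M := by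
      rw [Submodule.span_le]
      rintro q ⟨v, hv, rfl⟩
      simp only [SetLike.mem_coe, LinearMap.mem_ker]
      rw [hMdef, ← Xmon_cons]
      have hmem2 := Xmon_mem_span hmf (i :: v).length (i :: v) (le_refl _)
      have hle2 : Submodule.span ℝ {q : NCPoly d | ∃ w : List (Fin d), w.length ≤ (i :: v).length ∧ q = P w}
          ≤ LinearMap.ker L := by
        refine le_trans ?_ hker
        exact Submodule.span_mono (by rintro r ⟨w, hw, rfl⟩; exact ⟨w, by simp at hw ⊢; omega, rfl⟩)
      exact hle2 hmem2
    have h2 : M (Xmon u - P u) = 0 := hMker herr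
    rw [hMdef] at h2
    rw [h1, h2, add_zero]
  -- conclude
  have : ipS φ p p = L p := rfl
  rw [this]
  have hsplit2 : p = Xmon (i :: u) + (p - Xmon (i :: u)) := by abel
  rw [hsplit2, map_add, hLX, hLerr, add_zero]
end
end

section
/- Let φ be a state on R⟨x₁,…,x_d⟩ with a monic orthogonal polynomial system, and suppose the first moments vanish: φ(x_i) = 0 for all i. Then for degree one, φ(x_i x_j) = 0 whenever i ≠ j, and for (i,j) ≠ (t,s) one has φ(x_i x_j x_s x_t) = φ(x_i x_j)φ(x_s x_t) + Σ_{k: φ(x_k²)≠0} φ(x_i x_j x_k)φ(x_k x_s x_t)/φ(x_k²). -/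
noncomputable section
open scoped Classical

namespace MOPSAux
variable {d : ℕ}

lemma star_smul' (t : ℝ) (q : NCPoly d) : star (t • q) = t • star q := by
  rw [Algebra.smul_def, star_mul, FreeAlgebra.star_algebraMap, ← Algebra.commutes,
    ← Algebra.smul_def]

lemma ip_symm (φ : NCPoly d →ₗ[ℝ] ℝ) (hφ : IsState φ) (p q : NCPoly d) :
    φ (star p * q) = φ (star q * p) := by
  rw [← hφ.star_comp (star q * p), star_mul, star_star]

lemma cs_zero (φ : NCPoly d →ₗ[ℝ] ℝ) (hφ : IsState φ) (p : NCPoly d)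
    (hp : φ (star p * p) = 0) (q : NCPoly d) : φ (star p * q) = 0 := by
  set b := φ (star p * q) with hb
  set c := φ (star q * q) with hc
  have key : ∀ t : ℝ, 0 ≤ c * (t * t) + (2 * b) * t + 0 := by
    intro t
    have h0 := hφ.pos (p + t • q)
    have hsym := ip_symm φ hφ q p
    have expand : star (p + t • q) * (p + t • q)
        = star p * p + t • (star p * q) + t • (star q * p) + (t * t) • (star q * q) := by
      rw [star_add, star_smul']
      rw [add_mul, mul_add, mul_add, smul_mul_assoc, smul_mul_assoc, mul_smul_comm,
        mul_smul_comm, smul_smul]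
      abel
    rw [expand] at h0
    simp only [map_add, map_smul, smul_eq_mul, hp, hsym, ← hb, ← hc] at h0
    nlinarith [h0]
  have hd := discrim_le_zero key
  rw [discrim] at hd
  nlinarith [hd, sq_nonneg b]

lemma set_lt_one :
    {q : NCPoly d | ∃ v : List (Fin d), v.length < 1 ∧ q = Xmon v} = {1} := by
  ext q
  constructor
  · rintro ⟨v, hv, rfl⟩
    have : v = [] := List.eq_nil_of_length_eq_zero (by omega)
    simp [this, Xmon]
  · rintro rfl
    exact ⟨[], by simp, by simp [Xmon]⟩

lemma set_lt_two :
    {q : NCPoly d | ∃ v : List (Fin d), v.length < 2 ∧ q = Xmon v}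
      = Set.range (fun o : Option (Fin d) => o.elim (1 : NCPoly d) (fun k => FreeAlgebra.ι ℝ k)) := by
  ext q
  simp only [Set.mem_setOf_eq, Set.mem_range]
  constructor
  · rintro ⟨v, hv, rfl⟩
    match v with
    | [] => exact ⟨none, by simp [Xmon]⟩
    | [k] => exact ⟨some k, by simp [Xmon]⟩
    | a :: b :: l => simp at hv
  · rintro ⟨o, rfl⟩
    cases o with
    | none => exact ⟨[], by simp, by simp [Xmon]⟩
    | some k => exact ⟨[k], by simp, by simp [Xmon]⟩

end MOPSAux

/-- low-degree moment relations for a centered state with a MOPS. -/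
theorem low_degree_moment_relations {d : ℕ} (φ : NCPoly d →ₗ[ℝ] ℝ) (hφ : IsState φ)
    (hmops : ∃ P : List (Fin d) → NCPoly d, IsMOPS φ P)
    (hcentered : ∀ i : Fin d, φ (FreeAlgebra.ι ℝ i) = 0) :
    (∀ i j : Fin d, i ≠ j → φ (FreeAlgebra.ι ℝ i * FreeAlgebra.ι ℝ j) = 0) ∧
    (∀ i j s t : Fin d, (i, j) ≠ (t, s) →
      φ (FreeAlgebra.ι ℝ i * FreeAlgebra.ι ℝ j * FreeAlgebra.ι ℝ s * FreeAlgebra.ι ℝ t) =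
        φ (FreeAlgebra.ι ℝ i * FreeAlgebra.ι ℝ j) * φ (FreeAlgebra.ι ℝ s * FreeAlgebra.ι ℝ t) +
        ∑ k ∈ Finset.univ.filter (fun k : Fin d => φ (FreeAlgebra.ι ℝ k * FreeAlgebra.ι ℝ k) ≠ 0),
          φ (FreeAlgebra.ι ℝ i * FreeAlgebra.ι ℝ j * FreeAlgebra.ι ℝ k) *
            φ (FreeAlgebra.ι ℝ k * FreeAlgebra.ι ℝ s * FreeAlgebra.ι ℝ t) /
            φ (FreeAlgebra.ι ℝ k * FreeAlgebra.ι ℝ k)) := by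
  obtain ⟨P, hmonic, horth⟩ := hmops
  set ι : Fin d → NCPoly d := FreeAlgebra.ι ℝ with hι
  -- P [] = 1
  have hP0 : P [] = 1 := by
    have h := hmonic []
    have hset : {q : NCPoly d | ∃ v : List (Fin d),
        v.length < ([] : List (Fin d)).length ∧ q = Xmon v} = ∅ := by
      ext q; simp
    rw [hset, Submodule.span_empty, Submodule.mem_bot, sub_eq_zero] at h
    simpa [Xmon] using h
  -- P [i] = ι i
  have hP1 : ∀ i : Fin d, P [i] = ι i := by
    intro i
    have h := hmonic [i]
    rw [show ([i] : List (Fin d)).length = 1 from rfl, MOPSAux.set_lt_one,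
      Submodule.mem_span_singleton] at h
    obtain ⟨b, hb⟩ := h
    have hXi : Xmon [i] = ι i := by simp [Xmon, hι]
    rw [hXi] at hb
    have hPi : P [i] = ι i + b • 1 := by
      have h2 : P [i] = b • 1 + ι i := sub_eq_iff_eq_add.mp hb.symm
      rw [h2, add_comm]
    have h2 := horth [] [i] (by simp)
    rw [ipS, hP0, star_one, one_mul, hPi] at h2
    simp only [map_add, map_smul, smul_eq_mul, hcentered, hφ.unital, mul_one, zero_add] at h2
    rw [hPi, h2]
    simp
  -- Part 1
  have part1 : ∀ i j : Fin d, i ≠ j → φ (ι i * ι j) = 0 := by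
    intro i j hij
    have h := horth [i] [j] (by simpa using hij)
    rw [ipS, hP1, hP1, hι, FreeAlgebra.star_ι] at h
    exact h
  -- star reversal facts
  have hrev2 : ∀ x y : Fin d, φ (ι x * ι y) = φ (ι y * ι x) := by
    intro x y
    have : star (ι y * ι x) = ι x * ι y := by
      rw [star_mul, hι, FreeAlgebra.star_ι, FreeAlgebra.star_ι]
    rw [← this, hφ.star_comp]
  have hrev3 : ∀ x y z : Fin d, φ (ι x * ι y * ι z) = φ (ι z * (ι y * ι x)) := by
    intro x y z
    have : star (ι x * ι y * ι z) = ι z * (ι y * ι x) := by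
      rw [star_mul, star_mul, hι, FreeAlgebra.star_ι, FreeAlgebra.star_ι, FreeAlgebra.star_ι]
    rw [← hφ.star_comp (ι x * ι y * ι z), this]
  -- Cauchy-Schwarz degenerate
  have hcs : ∀ k : Fin d, φ (ι k * ι k) = 0 → ∀ q : NCPoly d, φ (ι k * q) = 0 := by
    intro k hk q
    have h := MOPSAux.cs_zero φ hφ (ι k) (by rw [hι, FreeAlgebra.star_ι]; exact hk) q
    rwa [hι, FreeAlgebra.star_ι] at h
  -- degree-2 decomposition
  have hdec : ∀ j i : Fin d, ∃ (a : ℝ) (f : Fin d → ℝ),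
      P [j, i] = ι j * ι i + a • (1 : NCPoly d) + ∑ k, f k • ι k := by
    intro j i
    have h := hmonic [j, i]
    rw [show ([j, i] : List (Fin d)).length = 2 from rfl, MOPSAux.set_lt_two,
      Submodule.mem_span_range_iff_exists_fun] at h
    obtain ⟨c, hc⟩ := h
    rw [Fintype.sum_option] at hc
    have hx : Xmon [j, i] = ι j * ι i := by simp [Xmon, hι]
    rw [hx] at hc
    refine ⟨c none, fun k => c (some k), ?_⟩
    simp only [Option.elim] at hc
    have h2 : P [j, i] = (c none • (1 : NCPoly d) + ∑ x, c (some x) • FreeAlgebra.ι ℝ x)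
        + ι j * ι i := sub_eq_iff_eq_add.mp hc.symm
    rw [h2]
    simp only [← hι]
    abel
  refine ⟨part1, ?_⟩
  intro i j s t hne
  obtain ⟨a, f, hPji⟩ := hdec j i
  obtain ⟨c, g, hPst⟩ := hdec s t
  -- constant coefficient relations
  have hconst : ∀ (j i : Fin d) (a : ℝ) (f : Fin d → ℝ),
      P [j, i] = ι j * ι i + a • (1 : NCPoly d) + ∑ k, f k • ι k →
      φ (ι j * ι i) + a = 0 := by
    intro j i a f hP
    have h := horth [] [j, i] (by simp)
    rw [ipS, hP0, star_one, one_mul, hP] at h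
    simpa only [map_add, map_smul, map_sum, smul_eq_mul, hcentered, hφ.unital, mul_one,
      mul_zero, Finset.sum_const_zero, add_zero] using h
  -- linear coefficient relations
  have hlin : ∀ (j i : Fin d) (a : ℝ) (f : Fin d → ℝ),
      P [j, i] = ι j * ι i + a • (1 : NCPoly d) + ∑ k, f k • ι k →
      ∀ k : Fin d, φ (ι k * (ι j * ι i)) + f k * φ (ι k * ι k) = 0 := by
    intro j i a f hP k
    have h := horth [k] [j, i] (by simp)
    rw [ipS, hP1, hι, FreeAlgebra.star_ι, ← hι, hP] at h
    rw [mul_add, mul_add, Finset.mul_sum] at h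
    simp only [map_add, map_sum, mul_smul_comm, map_smul, smul_eq_mul, mul_one,
      hcentered, mul_zero, add_zero] at h
    rw [Finset.sum_eq_single k (fun m _ hm => by rw [part1 k m (Ne.symm hm), mul_zero])
      (by simp)] at h
    exact h
  have hfk := hlin j i a f hPji
  have hgk := hlin s t c g hPst
  have hac : φ (ι j * ι i) + a = 0 := hconst j i a f hPji
  have hcc : φ (ι s * ι t) + c = 0 := hconst s t c g hPst
  -- main orthogonality expansion
  have hmain := horth [j, i] [s, t] (by
    simp only [ne_eq, List.cons.injEq, and_true, not_and, Prod.mk.injEq] at hne ⊢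
    intro hjs hit
    exact hne hit hjs)
  rw [ipS, hPji, hPst] at hmain
  have hstar1 : star (ι j * ι i + a • (1 : NCPoly d) + ∑ k, f k • ι k)
      = ι i * ι j + a • (1 : NCPoly d) + ∑ k, f k • ι k := by
    rw [star_add, star_add, star_sum]
    simp only [MOPSAux.star_smul', star_one, star_mul, hι, FreeAlgebra.star_ι]
  rw [hstar1] at hmain
  simp only [add_mul, mul_add, Finset.sum_mul, Finset.mul_sum, smul_mul_assoc, mul_smul_comm,
    smul_smul, one_mul, mul_one, map_add, map_sum, map_smul, smul_eq_mul, hφ.unital] at hmain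
  simp only [hcentered, mul_zero, Finset.sum_const_zero, add_zero] at hmain
  have hinner : ∀ x : Fin d, ∑ m, g x * (f m * φ (ι m * ι x)) = g x * (f x * φ (ι x * ι x)) := by
    intro x
    exact Finset.sum_eq_single x
      (fun m _ hm => by rw [part1 m x hm, mul_zero, mul_zero]) (by simp)
  simp only [hinner] at hmain
  simp only [← mul_assoc] at hmain
  have hmain2 : φ (ι i * ι j * ι s * ι t) + a * φ (ι s * ι t) + (c * φ (ι i * ι j) + c * a)
      + (∑ x, f x * φ (ι x * ι s * ι t)
        + ∑ x, (g x * φ (ι i * ι j * ι x) + g x * f x * φ (ι x * ι x))) = 0 := by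
    linarith [hmain]
  rw [← Finset.sum_add_distrib] at hmain2
  have hTsum : ∑ x : Fin d, (f x * φ (ι x * ι s * ι t)
        + (g x * φ (ι i * ι j * ι x) + g x * f x * φ (ι x * ι x)))
      = -∑ k ∈ Finset.univ.filter (fun k : Fin d => φ (ι k * ι k) ≠ 0),
          φ (ι i * ι j * ι k) * φ (ι k * ι s * ι t) / φ (ι k * ι k) := by
    rw [← Finset.sum_neg_distrib]
    refine (Finset.sum_subset (Finset.filter_subset _ _) ?_).symm.trans
      (Finset.sum_congr rfl ?_)
    · intro x _ hx
      simp only [Finset.mem_filter, Finset.mem_univ, true_and, not_not] at hx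
      have h1 : φ (ι x * ι s * ι t) = 0 := by
        rw [mul_assoc]; exact hcs x hx _
      have h2 : φ (ι i * ι j * ι x) = 0 := by
        rw [hrev3 i j x]; exact hcs x hx _
      rw [h1, h2, hx]
      ring
    · intro x hx
      have hw : φ (ι x * ι x) ≠ 0 := (Finset.mem_filter.mp hx).2
      have h1 : f x * φ (ι x * ι x) = -φ (ι i * ι j * ι x) := by
        have h := hfk x
        rw [← hrev3 i j x] at h
        linarith
      have h2 : g x * φ (ι x * ι x) = -φ (ι x * ι s * ι t) := by
        have h := hgk x
        rw [← mul_assoc] at h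
        linarith
      field_simp
      linear_combination (φ (ι x * ι s * ι t) + g x * φ (ι x * ι x)) * h1
  rw [hTsum] at hmain2
  have ha : a = -φ (ι i * ι j) := by
    have := hac
    rw [hrev2 j i] at this
    linarith
  have hc : c = -φ (ι s * ι t) := by linarith [hcc]
  rw [ha, hc] at hmain2
  linear_combination hmain2
end
end

section
/- With diagonal non-negative matrices C^{(k)} and the deformed kernel K_C on the full Fock space over C^d, the free creation operators a_i⁺ map ker K_C into ker K_C; i.e., K_C a_i⁺ η = 0 whenever K_C η = 0. -/
noncomputable section
open scoped Classical

/-- The algebraic full Fock space over ℝ^d (= ℂ^d with real structure): the free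
vector space on the set of words, a word `u` representing the basis tensor
`e_{u(1)} ⊗ ⋯ ⊗ e_{u(k)}`; the empty word represents the vacuum Ω. -/
abbrev FockF (d : ℕ) := List (Fin d) →₀ ℝ

def vac {d : ℕ} : FockF d := Finsupp.single [] 1

def eVec {d : ℕ} (u : List (Fin d)) : FockF d := Finsupp.single u 1

/-- Diagonal operator with diagonal entries `f u` in the tensor basis. -/
def diagOp {d : ℕ} (f : List (Fin d) → ℝ) : FockF d →ₗ[ℝ] FockF d :=
  Finsupp.lsum ℝ fun u => f u • Finsupp.lsingle u

/-- The diagonal entry of K_C at the basis tensor e_u: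
`K_u = ∏_{j=1}^{k} C_{(u(j),…,u(k))}`, the product of the `C`-entries over all
nonempty suffixes of `u`, corresponding to
`K_C = (I⊗…⊗I⊗C^{(1)}) ⋯ (I⊗C^{(k-1)}) C^{(k)}`. -/
def kC {d : ℕ} (c : List (Fin d) → ℝ) (u : List (Fin d)) : ℝ :=
  ∏ j ∈ Finset.range u.length, c (u.drop j)

/-- The kernel K_C as an operator. -/
def Kop {d : ℕ} (c : List (Fin d) → ℝ) : FockF d →ₗ[ℝ] FockF d := diagOp (kC c)

/-- The operator C acting as the diagonal matrix C^{(k)} on each H^{⊗k}. -/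
def Cop {d : ℕ} (c : List (Fin d) → ℝ) : FockF d →ₗ[ℝ] FockF d := diagOp c

/-- The undeformed inner product ⟨ζ,·⟩ (basis tensors orthonormal, distinct degrees
orthogonal), as a linear functional in the second variable. -/
def ipW {d : ℕ} (ζ : FockF d) : FockF d →ₗ[ℝ] ℝ :=
  Finsupp.lsum ℝ fun u => LinearMap.smulRight (LinearMap.id : ℝ →ₗ[ℝ] ℝ) (ζ u)

/-- The deformed pre-inner product ⟨ζ,η⟩_C = ⟨ζ, K_C η⟩, linear in the second variable. -/
def ipCL {d : ℕ} (c : List (Fin d) → ℝ) (ζ : FockF d) : FockF d →ₗ[ℝ] ℝ :=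
  (ipW ζ).comp (Kop c)

def ipC {d : ℕ} (c : List (Fin d) → ℝ) (ζ η : FockF d) : ℝ := ipCL c ζ η

/-- The deformed seminorm. -/
def nrmC {d : ℕ} (c : List (Fin d) → ℝ) (ζ : FockF d) : ℝ := Real.sqrt (ipC c ζ ζ)

/-- Free (left) creation operator a_i⁺. -/
def aPlus {d : ℕ} (i : Fin d) : FockF d →ₗ[ℝ] FockF d :=
  Finsupp.lmapDomain ℝ ℝ (fun u => i :: u)

/-- Free (left) annihilation operator a_i⁻. -/
def aMinus {d : ℕ} (i : Fin d) : FockF d →ₗ[ℝ] FockF d :=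
  Finsupp.lsum ℝ fun u =>
    match u with
    | [] => 0
    | j :: v => if j = i then Finsupp.lsingle v else 0

/-- The block-diagonal operator T with matrix entries `t w u` (T e_u = Σ_w t w u e_w,
the sum over words w of the same length as u). -/
def Tmat {d : ℕ} (t : List (Fin d) → List (Fin d) → ℝ) : FockF d →ₗ[ℝ] FockF d :=
  Finsupp.lsum ℝ fun u => ∑ w ∈ wordsLen d u.length, t w u • Finsupp.lsingle w

/-- t is degree preserving: the matrices T_i^{(k)} act within each H^{⊗k}. -/
def DegPres {d : ℕ} (t : Fin d → List (Fin d) → List (Fin d) → ℝ) : Prop :=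
  ∀ i w u, t i w u ≠ 0 → w.length = u.length

/-- The condition (T_i)^t K_C = K_C T_i, entrywise. -/
def TransposeCond {d : ℕ} (c : List (Fin d) → ℝ)
    (t : Fin d → List (Fin d) → List (Fin d) → ℝ) : Prop :=
  ∀ i u w, t i u w * kC c u = kC c w * t i w u

/-- The operator X_i = a_i⁺ + T_i + ã_i⁻, where ã_i⁻ = a_i⁻ C. -/
def Xop {d : ℕ} (c : List (Fin d) → ℝ) (t : Fin d → List (Fin d) → List (Fin d) → ℝ)
    (i : Fin d) : FockF d →ₗ[ℝ] FockF d :=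
  aPlus i + Tmat (t i) + (aMinus i).comp (Cop c)

/-- Evaluation of a polynomial in the operators X₁,…,X_d. -/
def evalX {d : ℕ} (c : List (Fin d) → ℝ) (t : Fin d → List (Fin d) → List (Fin d) → ℝ) :
    NCPoly d →ₐ[ℝ] Module.End ℝ (FockF d) :=
  FreeAlgebra.lift ℝ (fun i => Xop c t i)

/-- The Fock state φ_{C,{T_i}} : P ↦ ⟨Ω, P(X₁,…,X_d)Ω⟩_C. -/
def fockPhi {d : ℕ} (c : List (Fin d) → ℝ) (t : Fin d → List (Fin d) → List (Fin d) → ℝ) :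
    NCPoly d →ₗ[ℝ] ℝ :=
  (ipCL c vac).comp ((LinearMap.applyₗ (vac : FockF d)).comp (evalX c t).toLinearMap)


lemma diagOp_apply {d : ℕ} (f : List (Fin d) → ℝ) (η : FockF d) (w : List (Fin d)) :
    diagOp f η w = f w * η w := by
  classical
  simp only [diagOp, Finsupp.lsum_apply, Finsupp.sum_apply, LinearMap.smul_apply,
    Finsupp.lsingle_apply, Finsupp.smul_apply, Finsupp.single_apply, smul_eq_mul,
    mul_ite, mul_zero]
  rw [Finsupp.sum_ite_eq' η w (fun u r => f u * r)]
  by_cases h : w ∈ η.support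
  · simp [h]
  · simp [Finsupp.notMem_support_iff.mp h, if_neg h]

/-- creation operators preserve the kernel of K_C. -/
theorem creation_preserves_kernel {d : ℕ} (c : List (Fin d) → ℝ) (hc : ∀ u, 0 ≤ c u)
    (i : Fin d) (η : FockF d) (hη : Kop c η = 0) :
    Kop c (aPlus i η) = 0 := by
  classical
  have hη' : ∀ u, kC c u * η u = 0 := by
    intro u
    have := DFunLike.congr_fun hη u
    simpa [Kop, diagOp_apply] using this
  ext w
  rw [Kop, diagOp_apply]
  simp only [Finsupp.coe_zero, Pi.zero_apply]
  cases w with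
  | nil =>
    have h0 : (aPlus i η) [] = 0 := by
      apply Finsupp.mapDomain_notin_range
      rintro ⟨u, h⟩
      simp at h
    rw [h0, mul_zero]
  | cons j u =>
    by_cases hj : j = i
    · subst hj
      have hinj : Function.Injective (fun u : List (Fin d) => j :: u) :=
        fun a b h => by simpa using h
      have hval : (aPlus j η) (j :: u) = η u := by
        simp [aPlus, Finsupp.lmapDomain_apply, Finsupp.mapDomain_apply hinj]
      rw [hval]
      have hk : kC c (j :: u) = c (j :: u) * kC c u := by
        simp [kC, Finset.prod_range_succ', mul_comm]
      rw [hk, mul_assoc, hη' u, mul_zero]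
    · have h0 : (aPlus i η) (j :: u) = 0 := by
        apply Finsupp.mapDomain_notin_range
        rintro ⟨v, h⟩
        simp only [List.cons.injEq] at h
        exact hj h.1.symm
      rw [h0, mul_zero]
end
end

section
/- With the deformed kernel K_C built from diagonal matrices C^{(k)} on the full Fock space over C^d, the modified annihilation operators ã_i⁻ = a_i⁻ C satisfy K_C ã_i⁻ = a_i⁻ K_C on each H^{⊗k}; in particular ã_i⁻ maps ker K_C into itself. -/
noncomputable section
open scoped Classical

/-- K_C ã_i⁻ = a_i⁻ K_C, and hence ã_i⁻ preserves the kernel of K_C. -/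
theorem annihilation_intertwines_kernel {d : ℕ} (c : List (Fin d) → ℝ) (i : Fin d) :
    (∀ η : FockF d, Kop c (aMinus i (Cop c η)) = aMinus i (Kop c η)) ∧
    (∀ η : FockF d, Kop c η = 0 → Kop c (aMinus i (Cop c η)) = 0) := by
  have key : ∀ η : FockF d, Kop c (aMinus i (Cop c η)) = aMinus i (Kop c η) := by
    intro η
    induction η using Finsupp.induction_linear with
    | zero => simp
    | add f g hf hg => simp [map_add, hf, hg]
    | single u r =>
      simp only [Kop, Cop, diagOp, aMinus, Finsupp.lsum_single, LinearMap.smul_apply,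
        Finsupp.lsingle_apply, map_smul]
      cases u with
      | nil => simp
      | cons j v =>
        by_cases h : j = i
        · subst h
          simp only [eq_self_iff_true, if_true, Finsupp.lsum_single, LinearMap.smul_apply,
            Finsupp.lsingle_apply, map_smul, kC]
          rw [smul_smul]
          congr 1
          rw [List.length_cons, Finset.prod_range_succ', mul_comm]
          congr 1
        · simp [h]
  exact ⟨key, fun η h => by rw [key, h, map_zero]⟩
end
end

section
/- On the full Fock space over C^d equipped with the pre-inner product ⟨·,·⟩_C, the operator a_i⁺ + ã_i⁻ is symmetric: ⟨a_i⁺ξ, η⟩_C = ⟨ξ, ã_i⁻η⟩_C for all ξ ∈ H^{⊗k}, η ∈ H^{⊗(k+1)}. -/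
noncomputable section
open scoped Classical

lemma diagOp_single {d : ℕ} (f : List (Fin d) → ℝ) (v : List (Fin d)) (b : ℝ) :
    diagOp f (Finsupp.single v b) = Finsupp.single v (f v * b) := by
  rw [diagOp, Finsupp.lsum_single, LinearMap.smul_apply, Finsupp.lsingle_apply,
    Finsupp.smul_single, smul_eq_mul]

lemma ipW_single {d : ℕ} (ζ : FockF d) (v : List (Fin d)) (b : ℝ) :
    ipW ζ (Finsupp.single v b) = b * ζ v := by
  rw [ipW, Finsupp.lsum_single, LinearMap.smulRight_apply, LinearMap.id_apply, smul_eq_mul]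

lemma ipC_single {d : ℕ} (c : List (Fin d) → ℝ) (ζ : FockF d) (v : List (Fin d)) (b : ℝ) :
    ipC c ζ (Finsupp.single v b) = kC c v * b * ζ v := by
  rw [ipC, ipCL, LinearMap.comp_apply, Kop, diagOp_single, ipW_single]

lemma kC_cons {d : ℕ} (c : List (Fin d) → ℝ) (i : Fin d) (v : List (Fin d)) :
    kC c (i :: v) = c (i :: v) * kC c v := by
  simp [kC, Finset.prod_range_succ', mul_comm]

lemma aPlus_apply_cons {d : ℕ} (i : Fin d) (ξ : FockF d) (v : List (Fin d)) :
    (aPlus i ξ) (i :: v) = ξ v := by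
  simpa [aPlus] using
    Finsupp.mapDomain_apply (f := fun u : List (Fin d) => i :: u)
      (fun a b h => by simpa using h) ξ v

lemma aPlus_apply_ne {d : ℕ} (i j : Fin d) (hij : j ≠ i) (ξ : FockF d) (v : List (Fin d)) :
    (aPlus i ξ) (j :: v) = 0 := by
  refine Finsupp.mapDomain_notin_range _ _ ?_
  rintro ⟨u, hu⟩
  simp only at hu
  exact hij ((List.cons.injEq _ _ _ _ ▸ hu).1.symm)

lemma aPlus_apply_nil {d : ℕ} (i : Fin d) (ξ : FockF d) :
    (aPlus i ξ) [] = 0 := by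
  refine Finsupp.mapDomain_notin_range _ _ ?_
  rintro ⟨u, hu⟩
  cases hu

lemma aMinus_single_nil {d : ℕ} (i : Fin d) (b : ℝ) :
    aMinus i (Finsupp.single ([] : List (Fin d)) b) = 0 := by
  rw [aMinus, Finsupp.lsum_single]
  rfl

lemma aMinus_single_cons {d : ℕ} (i j : Fin d) (v : List (Fin d)) (b : ℝ) :
    aMinus i (Finsupp.single (j :: v) b) =
      if j = i then Finsupp.single v b else 0 := by
  rw [aMinus, Finsupp.lsum_single]
  by_cases h : j = i <;> simp [h]

/-- a_i⁺ and ã_i⁻ = a_i⁻C are mutually adjoint for the deformed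
pre-inner product, between degrees k and k+1. -/
theorem creation_annihilation_adjoint {d : ℕ} (c : List (Fin d) → ℝ) (hc : ∀ u, 0 ≤ c u)
    (i : Fin d) (k : ℕ) (ξ η : FockF d)
    (hξ : ∀ u ∈ ξ.support, u.length = k) (hη : ∀ u ∈ η.support, u.length = k + 1) :
    ipC c (aPlus i ξ) η = ipC c ξ (aMinus i (Cop c η)) := by
  clear hξ hη
  induction η using Finsupp.induction_linear with
  | zero => simp only [ipC, map_zero]
  | add f g hf hg =>
      simp only [ipC] at *
      rw [map_add, map_add (Cop c), map_add (aMinus i), map_add, hf, hg]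
  | single v b =>
      rw [show Cop c (Finsupp.single v b) = Finsupp.single v (c v * b) from
        diagOp_single ..]
      cases v with
      | nil =>
          rw [aMinus_single_nil, ipC_single, aPlus_apply_nil, mul_zero]
          simp only [ipC, map_zero]
      | cons j v =>
          rw [aMinus_single_cons]
          by_cases h : j = i
          · subst h
            rw [if_pos rfl, ipC_single, ipC_single, aPlus_apply_cons, kC_cons]
            ring
          · rw [if_neg h, ipC_single, aPlus_apply_ne i j h, mul_zero]
            simp only [ipC, map_zero]
end
end

section
/- Conversely, every state φ on R⟨x₁,…,x_d⟩ that has a monic orthogonal polynomial system admits a Fock space representation: there exist diagonal non-negative matrices C^{(k)} on (C^d)^{⊗k} and matrices T_i^{(k)} with (T_i^{(k)})^t K_C = K_C T_i^{(k)}, such that φ(P) = ⟨Ω, P(X₁,…,X_d)Ω⟩_C with X_i = a_i⁺ + T_i + a_i⁻C. -/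
noncomputable section
open scoped Classical

namespace FR
variable {d : ℕ}

lemma star_smul' (s : ℝ) (p : NCPoly d) : star (s • p) = s • star p := by
  rw [Algebra.smul_def, star_mul, FreeAlgebra.star_algebraMap, ← Algebra.commutes,
    ← Algebra.smul_def]

lemma ipS_symm {φ : NCPoly d →ₗ[ℝ] ℝ} (hφ : IsState φ) (p q : NCPoly d) :
    ipS φ p q = ipS φ q p := by
  unfold ipS
  rw [← hφ.star_comp (star p * q), star_mul, star_star]

lemma ipS_zero_of_null {φ : NCPoly d →ₗ[ℝ] ℝ} (hφ : IsState φ) {p : NCPoly d}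
    (hp : ipS φ p p = 0) (q : NCPoly d) : ipS φ p q = 0 := by
  have hp' : φ (star p * p) = 0 := hp
  have hsym : φ (star q * p) = φ (star p * q) := ipS_symm hφ q p
  have key : ∀ s : ℝ, 0 ≤ φ (star q * q) + 2*s*φ (star p * q) := by
    intro s
    have hpos := hφ.pos (q + s • p)
    have hx : star (q + s • p) * (q + s • p)
        = star q * q + s • (star q * p) + (s • (star p * q) + (s*s) • (star p * p)) := by
      rw [star_add, star_smul']
      simp only [add_mul, mul_add, smul_mul_assoc, mul_smul_comm, smul_smul, smul_add]
      abel
    rw [hx] at hpos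
    simp only [map_add, map_smul, smul_eq_mul, hp', hsym, mul_zero] at hpos
    linarith
  show φ (star p * q) = 0
  by_contra h
  have := key (-(φ (star q * q) + 1)/(2*φ (star p * q)))
  have h3 : 2 * (-(φ (star q * q) + 1)/(2*φ (star p * q))) * φ (star p * q)
      = -(φ (star q * q) + 1) := by field_simp
  rw [h3] at this
  linarith

lemma Xmon_nil : Xmon ([] : List (Fin d)) = 1 := rfl
lemma Xmon_cons (i : Fin d) (u : List (Fin d)) :
    Xmon (i::u) = FreeAlgebra.ι ℝ i * Xmon u := by simp [Xmon]

/-- spans of monomials of length < k, ≤ k, and of `P v` with `|v| ≤ k`. -/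
def MLt (d : ℕ) (k : ℕ) : Submodule ℝ (NCPoly d) :=
  Submodule.span ℝ {q | ∃ v : List (Fin d), v.length < k ∧ q = Xmon v}
def MLe (d : ℕ) (k : ℕ) : Submodule ℝ (NCPoly d) :=
  Submodule.span ℝ {q | ∃ v : List (Fin d), v.length ≤ k ∧ q = Xmon v}
def PLe (P : List (Fin d) → NCPoly d) (k : ℕ) : Submodule ℝ (NCPoly d) :=
  Submodule.span ℝ {q | ∃ v : List (Fin d), v.length ≤ k ∧ q = P v}

lemma P_nil {P : List (Fin d) → NCPoly d} (hm : IsMonicFamily P) : P [] = 1 := by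
  have h := hm []
  have he : {q : NCPoly d | ∃ v : List (Fin d), v.length < ([] : List (Fin d)).length ∧ q = Xmon v}
      = ∅ := by ext q; simp
  rw [he, Submodule.span_empty, Submodule.mem_bot, sub_eq_zero] at h
  simpa [Xmon_nil] using h

lemma PLe_mono {P : List (Fin d) → NCPoly d} {k l : ℕ} (h : k ≤ l) : PLe P k ≤ PLe P l := by
  apply Submodule.span_mono
  rintro q ⟨v, hv, rfl⟩
  exact ⟨v, hv.trans h, rfl⟩

lemma mul_MLt {k : ℕ} (i : Fin d) {q : NCPoly d} (h : q ∈ MLt d k) :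
    FreeAlgebra.ι ℝ i * q ∈ MLe d k := by
  have h2 := Submodule.mem_map_of_mem (f := LinearMap.mulLeft ℝ (FreeAlgebra.ι ℝ i)) h
  rw [MLt, Submodule.map_span] at h2
  refine Submodule.span_le.mpr ?_ h2
  rintro x ⟨y, ⟨v, hv, rfl⟩, rfl⟩
  refine Submodule.subset_span ⟨i::v, by simpa using hv, ?_⟩
  simp [Xmon_cons, LinearMap.mulLeft_apply]

lemma Xmon_mem_PLe {P : List (Fin d) → NCPoly d} (hm : IsMonicFamily P) :
    ∀ k, ∀ u : List (Fin d), u.length ≤ k → Xmon u ∈ PLe P k := by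
  intro k
  induction k with
  | zero =>
    intro u hu
    rw [List.length_eq_zero_iff.mp (Nat.le_zero.mp hu)]
    rw [Xmon_nil, ← P_nil hm]
    exact Submodule.subset_span ⟨[], le_refl _, rfl⟩
  | succ k ih =>
    intro u hu
    have h1 : P u - Xmon u ∈ PLe P k := by
      refine Submodule.span_le.mpr ?_ (hm u)
      rintro q ⟨v, hv, rfl⟩
      exact ih v (by omega)
    have h2 : P u ∈ PLe P (k+1) := Submodule.subset_span ⟨u, hu, rfl⟩
    rw [← sub_sub_cancel (P u) (Xmon u)]
    exact sub_mem h2 (PLe_mono (Nat.le_succ k) h1)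

lemma MLt_le_PLe {P : List (Fin d) → NCPoly d} (hm : IsMonicFamily P) (k : ℕ) :
    MLt d (k+1) ≤ PLe P k := by
  refine Submodule.span_le.mpr ?_
  rintro q ⟨v, hv, rfl⟩
  exact Xmon_mem_PLe hm k v (by omega)

lemma MLe_le_PLe {P : List (Fin d) → NCPoly d} (hm : IsMonicFamily P) (k : ℕ) :
    MLe d k ≤ PLe P k := by
  refine Submodule.span_le.mpr ?_
  rintro q ⟨v, hv, rfl⟩
  exact Xmon_mem_PLe hm k v hv

/-- three-term structure: x_i P u - P(i::u) has degree ≤ |u|. -/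
lemma three_term {P : List (Fin d) → NCPoly d} (hm : IsMonicFamily P) (i : Fin d)
    (u : List (Fin d)) :
    FreeAlgebra.ι ℝ i * P u - P (i::u) ∈ PLe P u.length := by
  have h1 : FreeAlgebra.ι ℝ i * (P u - Xmon u) ∈ MLe d u.length := mul_MLt i (hm u)
  have h2 : P (i::u) - Xmon (i::u) ∈ MLt d (u.length + 1) := by
    exact hm (i::u)
  have ID : FreeAlgebra.ι ℝ i * P u - P (i::u)
      = FreeAlgebra.ι ℝ i * (P u - Xmon u) - (P (i::u) - Xmon (i::u)) := by
    rw [Xmon_cons, mul_sub]; abel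
  rw [ID]
  exact sub_mem (MLe_le_PLe hm _ h1) (MLt_le_PLe hm _ h2)

variable {φ : NCPoly d →ₗ[ℝ] ℝ} {P : List (Fin d) → NCPoly d}


/-- inner product with fixed left argument, as a linear map. -/
def ipL (φ : NCPoly d →ₗ[ℝ] ℝ) (p : NCPoly d) : NCPoly d →ₗ[ℝ] ℝ :=
  φ ∘ₗ LinearMap.mulLeft ℝ (star p)

lemma ipL_apply (p q : NCPoly d) : ipL φ p q = ipS φ p q := rfl

lemma ipS_mul_left (i : Fin d) (q a : NCPoly d) :
    ipS φ (FreeAlgebra.ι ℝ i * q) a = ipS φ q (FreeAlgebra.ι ℝ i * a) := by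
  unfold ipS
  rw [star_mul, FreeAlgebra.star_ι, mul_assoc]

def Nn (φ : NCPoly d →ₗ[ℝ] ℝ) (P : List (Fin d) → NCPoly d) (u : List (Fin d)) : ℝ :=
  ipS φ (P u) (P u)

def cA (φ : NCPoly d →ₗ[ℝ] ℝ) (P : List (Fin d) → NCPoly d) (u : List (Fin d)) : ℝ :=
  if Nn φ P u.tail = 0 then 0 else Nn φ P u / Nn φ P u.tail

def tA (φ : NCPoly d →ₗ[ℝ] ℝ) (P : List (Fin d) → NCPoly d) (i : Fin d)
    (w u : List (Fin d)) : ℝ :=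
  if w.length = u.length ∧ Nn φ P w ≠ 0 then
    ipS φ (P w) (FreeAlgebra.ι ℝ i * P u) / Nn φ P w else 0

lemma orth_high (hmo : IsMOPS φ P) {k : ℕ} {w : List (Fin d)} (hw : k < w.length)
    {q : NCPoly d} (hq : q ∈ PLe P k) : ipS φ (P w) q = 0 := by
  have hker : PLe P k ≤ LinearMap.ker (ipL φ (P w)) := by
    rw [PLe, Submodule.span_le]
    rintro x ⟨v, hv, rfl⟩
    have hne : w ≠ v := by
      intro h; rw [h] at hw; omega
    simpa [LinearMap.mem_ker, ipL_apply] using hmo.2 w v hne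
  simpa [LinearMap.mem_ker, ipL_apply] using hker hq

lemma orthEval (hmo : IsMOPS φ P) (a b : List (Fin d)) :
    ipS φ (P a) (P b) = if b = a then Nn φ P a else 0 := by
  by_cases h : b = a
  · subst h; simp [Nn]
  · rw [if_neg h]
    exact hmo.2 a b (fun hh => h hh.symm)

lemma S_top (hmo : IsMOPS φ P) {w u : List (Fin d)} (hw : w.length = u.length + 1) (i : Fin d) :
    ipS φ (P w) (FreeAlgebra.ι ℝ i * P u) = if w = i::u then Nn φ P w else 0 := by
  have hdec : FreeAlgebra.ι ℝ i * P u
      = P (i::u) + (FreeAlgebra.ι ℝ i * P u - P (i::u)) := by abel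
  rw [← ipL_apply, hdec, map_add, ipL_apply, ipL_apply]
  rw [orth_high hmo (by omega) (three_term hmo.1 i u)]
  rw [orthEval hmo w (i::u), add_zero]
  by_cases h : w = i :: u
  · rw [if_pos h, if_pos h.symm]
  · rw [if_neg h, if_neg (fun hh => h hh.symm)]

lemma S_hi (hmo : IsMOPS φ P) {w u : List (Fin d)} (hw : u.length + 1 < w.length) (i : Fin d) :
    ipS φ (P w) (FreeAlgebra.ι ℝ i * P u) = 0 := by
  have hdec : FreeAlgebra.ι ℝ i * P u
      = P (i::u) + (FreeAlgebra.ι ℝ i * P u - P (i::u)) := by abel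
  rw [← ipL_apply, hdec, map_add, ipL_apply, ipL_apply]
  rw [orth_high hmo (by omega) (three_term hmo.1 i u)]
  have hne : w ≠ i :: u := by intro h; rw [h] at hw; simp at hw
  rw [hmo.2 w (i::u) hne, add_zero]

lemma S_symm (hφ : IsState φ) (w u : List (Fin d)) (i : Fin d) :
    ipS φ (P w) (FreeAlgebra.ι ℝ i * P u) = ipS φ (P u) (FreeAlgebra.ι ℝ i * P w) := by
  rw [← ipS_mul_left, ipS_symm hφ]

lemma null_step (hφ : IsState φ) (hmo : IsMOPS φ P) {u : List (Fin d)}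
    (hu : Nn φ P u = 0) (i : Fin d) : Nn φ P (i::u) = 0 := by
  have h1 : Nn φ P (i::u) = ipS φ (P (i::u)) (FreeAlgebra.ι ℝ i * P u) := by
    rw [S_top hmo (by simp) i, if_pos rfl]
  rw [h1, S_symm hφ, ipS_zero_of_null hφ hu]

lemma Nn_nonneg (hφ : IsState φ) (u : List (Fin d)) : 0 ≤ Nn φ P u := hφ.pos (P u)

lemma Nn_nil (hφ : IsState φ) (hm : IsMonicFamily P) : Nn φ P ([] : List (Fin d)) = 1 := by
  unfold Nn ipS
  rw [P_nil hm]
  simpa using hφ.unital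

lemma kC_eq (hφ : IsState φ) (hmo : IsMOPS φ P) (u : List (Fin d)) :
    kC (cA φ P) u = Nn φ P u := by
  induction u with
  | nil => simpa [kC] using (Nn_nil hφ hmo.1).symm
  | cons i v ih =>
    have hstep : kC (cA φ P) (i::v) = kC (cA φ P) v * cA φ P (i::v) := by
      unfold kC
      rw [List.length_cons, Finset.prod_range_succ']
      simp [List.drop_succ_cons]
    rw [hstep, ih]
    by_cases hv : Nn φ P v = 0
    · rw [hv, zero_mul]
      exact (null_step hφ hmo hv i).symm
    · unfold cA
      rw [List.tail_cons, if_neg hv, mul_comm, div_mul_cancel₀ _ hv]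

lemma cA_nonneg (hφ : IsState φ) (u : List (Fin d)) : 0 ≤ cA φ P u := by
  unfold cA
  split
  · exact le_refl 0
  · exact div_nonneg (Nn_nonneg hφ _) (Nn_nonneg hφ _)

lemma transpose_cond (hφ : IsState φ) (hmo : IsMOPS φ P) :
    TransposeCond (cA φ P) (tA φ P) := by
  intro i u w
  rw [kC_eq hφ hmo, kC_eq hφ hmo]
  by_cases hl : u.length = w.length
  · by_cases hu : Nn φ P u = 0
    · rw [tA, if_neg (by tauto), zero_mul]
      by_cases hw : Nn φ P w = 0
      · rw [tA, if_neg (by tauto), mul_zero]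
      · rw [tA, if_pos ⟨hl.symm, hw⟩, mul_comm, div_mul_cancel₀ _ hw, S_symm hφ]
        exact (ipS_zero_of_null hφ hu _).symm
    · rw [tA, if_pos ⟨hl, hu⟩, div_mul_cancel₀ _ hu]
      by_cases hw : Nn φ P w = 0
      · rw [tA, if_neg (by tauto), mul_zero]
        rw [S_symm hφ, ipS_zero_of_null hφ hw]
      · rw [tA, if_pos ⟨hl.symm, hw⟩, mul_div_cancel₀ _ hw]
        exact S_symm hφ u w i
  · rw [tA, if_neg (by tauto), tA, if_neg (by tauto), zero_mul, mul_zero]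

lemma mem_wordsLen {k : ℕ} {u : List (Fin d)} : u ∈ wordsLen d k ↔ u.length = k := by
  induction k generalizing u with
  | zero => simp [wordsLen, List.length_eq_zero_iff]
  | succ k ih =>
    cases u with
    | nil => simp [wordsLen]
    | cons j v =>
      simp only [wordsLen, Finset.mem_image, Finset.mem_product, Finset.mem_univ, true_and,
        Prod.exists, List.length_cons, Nat.add_right_cancel_iff]
      constructor
      · rintro ⟨a, b, hb, h⟩
        cases h
        exact ih.mp hb
      · intro h
        exact ⟨j, v, ih.mpr h, rfl⟩

lemma aPlus_e (i : Fin d) (u : List (Fin d)) : aPlus i (eVec u) = eVec (i::u) := by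
  unfold aPlus eVec
  rw [Finsupp.lmapDomain_apply, Finsupp.mapDomain_single]

lemma Cop_e (c : List (Fin d) → ℝ) (u : List (Fin d)) : Cop c (eVec u) = c u • eVec u := by
  unfold Cop diagOp eVec
  rw [Finsupp.lsum_single]
  simp

lemma aMinus_nil (i : Fin d) : aMinus i (eVec ([] : List (Fin d))) = 0 := by
  unfold aMinus eVec
  rw [Finsupp.lsum_single]
  rfl

lemma aMinus_cons (i j : Fin d) (v : List (Fin d)) :
    aMinus i (eVec (j::v)) = if j = i then eVec v else 0 := by
  unfold aMinus eVec
  rw [Finsupp.lsum_single]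
  by_cases h : j = i <;> simp [h]

lemma Tmat_e (t : List (Fin d) → List (Fin d) → ℝ) (u : List (Fin d)) :
    Tmat t (eVec u) = ∑ w ∈ wordsLen d u.length, t w u • eVec w := by
  unfold Tmat eVec
  rw [Finsupp.lsum_single]
  rw [LinearMap.sum_apply]
  apply Finset.sum_congr rfl
  intro w _
  simp

lemma diagOp_apply (f : List (Fin d) → ℝ) (η : FockF d) (w : List (Fin d)) :
    diagOp f η w = f w * η w := by
  unfold diagOp
  rw [Finsupp.lsum_apply, Finsupp.sum_apply]
  rw [Finsupp.sum]
  by_cases hw : w ∈ η.support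
  · rw [Finset.sum_eq_single_of_mem w hw]
    · simp [Finsupp.single_apply]
    · intro b _ hb
      simp [Finsupp.single_apply, hb]
  · have h0 : η w = 0 := Finsupp.notMem_support_iff.mp hw
    rw [h0, mul_zero]
    apply Finset.sum_eq_zero
    intro b hb
    have : b ≠ w := by intro h; rw [h] at hb; exact hw hb
    simp [Finsupp.single_apply, this]

lemma ipW_vac (η : FockF d) : ipW (vac (d := d)) η = η [] := by
  unfold ipW vac
  rw [Finsupp.lsum_apply, Finsupp.sum]
  by_cases hm : ([] : List (Fin d)) ∈ η.support
  · rw [Finset.sum_eq_single_of_mem [] hm]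
    · simp [Finsupp.single_apply]
    · intro b _ hb
      simp [Finsupp.single_apply, hb]
  · have h0 : η [] = 0 := Finsupp.notMem_support_iff.mp hm
    rw [h0]
    apply Finset.sum_eq_zero
    intro b hb
    have : b ≠ [] := by intro h; rw [h] at hb; exact hm hb
    simp [Finsupp.single_apply, this]

lemma ipCL_vac (c : List (Fin d) → ℝ) (η : FockF d) : ipCL c vac η = η [] := by
  unfold ipCL Kop
  rw [LinearMap.comp_apply, ipW_vac, diagOp_apply]
  simp [kC]

lemma master (hφ : IsState φ) (hmo : IsMOPS φ P) (i : Fin d) (w u : List (Fin d)) :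
    ipS φ (P w) (FreeAlgebra.ι ℝ i * P u) =
      (if w = i::u then Nn φ P w else 0)
      + (if w.length = u.length then ipS φ (P w) (FreeAlgebra.ι ℝ i * P u) else 0)
      + cA φ P u * (if u = i::w then Nn φ P w else 0) := by
  rcases Nat.lt_trichotomy w.length u.length with h | h | h
  · have hA : w ≠ i :: u := by intro he; rw [he, List.length_cons] at h; omega
    have hB : w.length ≠ u.length := by omega
    rw [if_neg hA, if_neg hB, zero_add, zero_add, S_symm hφ]
    by_cases hlen : u.length = w.length + 1
    · rw [S_top hmo hlen i]
      by_cases he : u = i :: w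
      · rw [if_pos he, if_pos he]
        subst he
        by_cases hw0 : Nn φ P w = 0
        · rw [cA, List.tail_cons, if_pos hw0, zero_mul]
          exact null_step hφ hmo hw0 i
        · rw [cA, List.tail_cons, if_neg hw0, div_mul_cancel₀ _ hw0]
      · rw [if_neg he, if_neg he, mul_zero]
    · have h2 : w.length + 1 < u.length := by omega
      rw [S_hi hmo h2 i]
      have hne : u ≠ i :: w := by intro he; rw [he, List.length_cons] at hlen; omega
      rw [if_neg hne, mul_zero]
  · have hA : w ≠ i :: u := by intro he; rw [he, List.length_cons] at h; omega
    have hC : u ≠ i :: w := by intro he; rw [he, List.length_cons] at h; omega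
    rw [if_pos h, if_neg hA, if_neg hC, mul_zero, zero_add, add_zero]
  · have hB : w.length ≠ u.length := by omega
    have hC : u ≠ i :: w := by intro he; rw [he, List.length_cons] at h; omega
    rw [if_neg hB, if_neg hC, mul_zero, add_zero, add_zero]
    by_cases hlen : w.length = u.length + 1
    · rw [S_top hmo hlen i]
    · have hne : w ≠ i :: u := by intro he; rw [he, List.length_cons] at hlen; omega
      rw [S_hi hmo (by omega) i, if_neg hne]

/-- the map e_u ↦ P u. -/
def Uop (P : List (Fin d) → NCPoly d) : FockF d →ₗ[ℝ] NCPoly d :=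
  Finsupp.lsum ℝ fun u => LinearMap.toSpanSingleton ℝ _ (P u)

lemma Uop_e (u : List (Fin d)) : Uop P (eVec u) = P u := by
  unfold Uop eVec
  rw [Finsupp.lsum_single]
  simp [LinearMap.toSpanSingleton_apply]

lemma crux (hφ : IsState φ) (hmo : IsMOPS φ P) (i : Fin d) (u w : List (Fin d)) :
    ipS φ (P w) (Uop P (Xop (cA φ P) (tA φ P) i (eVec u)))
      = ipS φ (P w) (FreeAlgebra.ι ℝ i * P u) := by
  have hXe : Xop (cA φ P) (tA φ P) i (eVec u)
      = eVec (i::u) + (∑ w' ∈ wordsLen d u.length, tA φ P i w' u • eVec w')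
        + cA φ P u • aMinus i (eVec u) := by
    unfold Xop
    rw [LinearMap.add_apply, LinearMap.add_apply, LinearMap.comp_apply, aPlus_e, Tmat_e,
      Cop_e, map_smul]
  have hA : ipS φ (P w) (P (i::u)) = if w = i::u then Nn φ P w else 0 := by
    rw [orthEval hmo w (i::u)]
    by_cases h : w = i::u
    · rw [if_pos h, if_pos h.symm]
    · rw [if_neg h, if_neg (fun hh => h hh.symm)]
  have hB : ipL φ (P w) (∑ w' ∈ wordsLen d u.length, tA φ P i w' u • P w')
      = if w.length = u.length then ipS φ (P w) (FreeAlgebra.ι ℝ i * P u) else 0 := by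
    rw [map_sum]
    have hterm : ∀ w' ∈ wordsLen d u.length,
        ipL φ (P w) (tA φ P i w' u • P w')
          = if w' = w then tA φ P i w u * Nn φ P w else 0 := by
      intro w' _
      rw [map_smul, smul_eq_mul, ipL_apply, orthEval hmo w w']
      by_cases h : w' = w
      · rw [if_pos h, if_pos h, h]
      · rw [if_neg h, if_neg h, mul_zero]
    rw [Finset.sum_congr rfl hterm, Finset.sum_ite_eq' (wordsLen d u.length) w]
    by_cases hw : w.length = u.length
    · rw [if_pos (mem_wordsLen.mpr hw), if_pos hw]
      by_cases hN : Nn φ P w = 0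
      · rw [tA, if_neg (by tauto), zero_mul, ipS_zero_of_null hφ hN]
      · rw [tA, if_pos ⟨hw, hN⟩, div_mul_cancel₀ _ hN]
    · rw [if_neg (fun hh => hw (mem_wordsLen.mp hh)), if_neg hw]
  have hC : cA φ P u • ipL φ (P w) (Uop P (aMinus i (eVec u)))
      = cA φ P u * (if u = i::w then Nn φ P w else 0) := by
    cases u with
    | nil =>
      rw [aMinus_nil, map_zero, map_zero, smul_zero, if_neg (by simp), mul_zero]
    | cons j v =>
      rw [aMinus_cons]
      by_cases hj : j = i
      · subst hj
        rw [if_pos rfl, Uop_e, ipL_apply, orthEval hmo w v, smul_eq_mul]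
        congr 1
        by_cases hv : v = w
        · rw [if_pos hv, if_pos (by rw [hv])]
        · rw [if_neg hv, if_neg (fun hh => hv (by injection hh))]
      · rw [if_neg hj, map_zero, map_zero, smul_zero,
          if_neg (fun hh => hj (by injection hh)), mul_zero]
  rw [hXe, map_add, map_add, map_smul, map_sum]
  simp only [map_smul, Uop_e]
  rw [← ipL_apply, map_add, map_add, map_smul, hC, hB, ipL_apply, hA]
  exact (master hφ hmo i w u).symm

lemma xmon_span_top : Submodule.span ℝ (Set.range (Xmon (d := d))) = ⊤ := by
  rw [eq_top_iff]
  rintro p -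
  induction p using FreeAlgebra.induction with
  | grade0 r =>
    rw [Algebra.algebraMap_eq_smul_one]
    exact Submodule.smul_mem _ r (Submodule.subset_span ⟨[], by simp [Xmon]⟩)
  | grade1 x => exact Submodule.subset_span ⟨[x], by simp [Xmon]⟩
  | mul a b ha hb =>
    have h := Submodule.mul_mem_mul ha hb
    rw [Submodule.span_mul_span] at h
    refine Submodule.span_le.mpr ?_ h
    rintro x hx
    rw [Set.mem_mul] at hx
    obtain ⟨y, hy, z, hz, rfl⟩ := hx
    obtain ⟨uy, rfl⟩ := hy
    obtain ⟨uz, rfl⟩ := hz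
    exact Submodule.subset_span ⟨uy ++ uz, by simp [Xmon]⟩
  | add a b ha hb => exact add_mem ha hb

lemma p_span_top (hm : IsMonicFamily P) : Submodule.span ℝ (Set.range P) = ⊤ := by
  rw [eq_top_iff, ← xmon_span_top]
  refine Submodule.span_le.mpr ?_
  rintro q ⟨u, rfl⟩
  have h := Xmon_mem_PLe hm u.length u (le_refl _)
  exact (Submodule.span_le.mpr
    (by rintro x ⟨v, hv, rfl⟩; exact Submodule.subset_span ⟨v, rfl⟩)) h

lemma ext_from_P (hφ : IsState φ) (hm : IsMonicFamily P) {a b : NCPoly d}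
    (h : ∀ w, ipS φ (P w) a = ipS φ (P w) b) (q : NCPoly d) : ipS φ q a = ipS φ q b := by
  have he : ipL φ a = ipL φ b := by
    apply LinearMap.ext_on (p_span_top hm)
    rintro x ⟨w, rfl⟩
    show ipL φ a (P w) = ipL φ b (P w)
    rw [ipL_apply, ipL_apply, ipS_symm hφ a (P w), ipS_symm hφ b (P w)]
    exact h w
  rw [ipS_symm hφ q a, ipS_symm hφ q b, ← ipL_apply, ← ipL_apply, he]

lemma interL1 (hφ : IsState φ) (hmo : IsMOPS φ P) (i : Fin d) (q : NCPoly d) (ζ : FockF d) :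
    ipS φ q (Uop P (Xop (cA φ P) (tA φ P) i ζ))
      = ipS φ q (FreeAlgebra.ι ℝ i * Uop P ζ) := by
  have key : (ipL φ q) ∘ₗ (Uop P) ∘ₗ (Xop (cA φ P) (tA φ P) i)
      = (ipL φ q) ∘ₗ (LinearMap.mulLeft ℝ (FreeAlgebra.ι ℝ i)) ∘ₗ (Uop P) := by
    apply Finsupp.lhom_ext
    intro a b
    have hsingle : (Finsupp.single a b : FockF d) = b • eVec a := by
      rw [eVec, Finsupp.smul_single, smul_eq_mul, mul_one]
    rw [hsingle, map_smul, map_smul]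
    congr 1
    show ipL φ q (Uop P (Xop (cA φ P) (tA φ P) i (eVec a)))
      = ipL φ q (FreeAlgebra.ι ℝ i * Uop P (eVec a))
    rw [ipL_apply, ipL_apply, Uop_e]
    exact ext_from_P hφ hmo.1 (fun w => crux hφ hmo i a w) q
  have := LinearMap.congr_fun key ζ
  simpa [ipL_apply] using this

lemma main_eval (hφ : IsState φ) (hmo : IsMOPS φ P) (p q : NCPoly d) :
    ipS φ q (Uop P ((evalX (cA φ P) (tA φ P) p) vac)) = ipS φ q p := by
  have hvac : (vac : FockF d) = eVec [] := rfl
  have hmon : ∀ u : List (Fin d), ∀ q : NCPoly d,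
      ipS φ q (Uop P ((evalX (cA φ P) (tA φ P) (Xmon u)) vac)) = ipS φ q (Xmon u) := by
    intro u
    induction u with
    | nil =>
      intro q
      rw [Xmon_nil, map_one, Module.End.one_apply, hvac, Uop_e, P_nil hmo.1]
    | cons i v ih =>
      intro q
      rw [Xmon_cons, map_mul, Module.End.mul_apply]
      have hXi : evalX (cA φ P) (tA φ P) (FreeAlgebra.ι ℝ i)
          = Xop (cA φ P) (tA φ P) i := FreeAlgebra.lift_ι_apply _ _
      rw [hXi, interL1 hφ hmo, ← ipS_mul_left, ih (FreeAlgebra.ι ℝ i * q), ipS_mul_left]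
  have key : (ipL φ q) ∘ₗ (Uop P) ∘ₗ (LinearMap.applyₗ (vac : FockF d))
        ∘ₗ (evalX (cA φ P) (tA φ P)).toLinearMap = ipL φ q := by
    apply LinearMap.ext_on (xmon_span_top (d := d))
    rintro x ⟨u, rfl⟩
    simpa [LinearMap.applyₗ_apply_apply, ipL_apply] using hmon u q
  have := LinearMap.congr_fun key p
  simpa [LinearMap.applyₗ_apply_apply, ipL_apply] using this

lemma vac_coeff (hφ : IsState φ) (hmo : IsMOPS φ P) (ζ : FockF d) :
    ipS φ (1 : NCPoly d) (Uop P ζ) = ζ [] := by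
  have key : (ipL φ (1 : NCPoly d)) ∘ₗ (Uop P)
      = (Finsupp.lapply ([] : List (Fin d)) : FockF d →ₗ[ℝ] ℝ) := by
    apply Finsupp.lhom_ext
    intro a b
    show ipL φ 1 (Uop P (Finsupp.single a b)) = (Finsupp.single a b : FockF d) []
    have hsingle : (Finsupp.single a b : FockF d) = b • eVec a := by
      rw [eVec, Finsupp.smul_single, smul_eq_mul, mul_one]
    rw [hsingle, map_smul, map_smul, Uop_e, smul_eq_mul, Finsupp.smul_apply, smul_eq_mul]
    rw [ipL_apply, ← P_nil hmo.1, orthEval hmo [] a]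
    by_cases ha : a = []
    · subst ha
      rw [if_pos rfl, Nn_nil hφ hmo.1, eVec]
      simp
    · rw [if_neg ha, eVec]
      simp [Finsupp.single_apply, ha]
  exact LinearMap.congr_fun key ζ

end FR

/-- every state with a MOPS has a Fock space representation. -/
theorem state_with_mops_has_fock_representation {d : ℕ} (φ : NCPoly d →ₗ[ℝ] ℝ)
    (hφ : IsState φ) (hmops : ∃ P : List (Fin d) → NCPoly d, IsMOPS φ P) :
    ∃ (c : List (Fin d) → ℝ) (t : Fin d → List (Fin d) → List (Fin d) → ℝ),
      (∀ u, 0 ≤ c u) ∧ DegPres t ∧ TransposeCond c t ∧ φ = fockPhi c t := by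
  obtain ⟨P, hmo⟩ := hmops
  refine ⟨FR.cA φ P, FR.tA φ P, fun u => FR.cA_nonneg hφ u, ?_, FR.transpose_cond hφ hmo, ?_⟩
  · intro i w u h
    by_contra hl
    rw [FR.tA, if_neg (by tauto)] at h
    exact h rfl
  · apply LinearMap.ext
    intro p
    have h1 : fockPhi (FR.cA φ P) (FR.tA φ P) p
        = ((evalX (FR.cA φ P) (FR.tA φ P) p) vac) [] := by
      unfold fockPhi
      rw [LinearMap.comp_apply, LinearMap.comp_apply, FR.ipCL_vac]
      rfl
    have h2 : φ p = ipS φ 1 p := by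
      unfold ipS
      rw [star_one, one_mul]
    rw [h1, h2, ← FR.main_eval hφ hmo p 1, FR.vac_coeff hφ hmo]
end
end
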